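/- arXiv:1911.04933 — 2 statements merged into one kernel-verified Lean document; each statement's English description precedes it below -/
import Mathlib

section
/- Let A, B be symmetric positive definite d×d real matrices, w₀, w*_A, w*_B ∈ ℝᵈ, and define w_A(t) = w*_A + exp(−tA)(w₀ − w*_A), d_A(t) = w_A(t) − w*_A, d_B(t) = w_A(t) − w*_B, and the scrubbed point h_t(w_A(t)) = w_A(t) + exp(−tB) exp(tA) d_A(t) + exp(−tB)(d_B(t) − d_A(t)) − d_B(t). Then as t → ∞ the scrubbing map converges to the Newton update S_∞(w) = w − B⁻¹∇L_{𝒟_r}(w) where ∇L_{𝒟_r}(w) = B(w − w*_B): that is, ‖h_t(w_A(t)) − (w_A(t) − B⁻¹ B (w_A(t) − w*_B))‖ → 0 as t → ∞. (Paper's Proposition 3, limiting case: after the optimization has converged, the optimal scrubbing reduces to the Newton update.) -/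
open Matrix NormedSpace Filter
open scoped Topology

/-!
Since `e^{tA} e^{-tA} = 1`, the scrubbed point collapses to `w*_B + e^{-tB}(w₀ - w*_B)`, while
`B⁻¹ B = 1` makes the Newton update of any point equal to `w*_B`. The residual
`e^{-tB}(w₀ - w*_B)` vanishes as `t → ∞`, because diagonalising `B` in an orthonormal eigenbasis
turns `e^{-tB}` into the diagonal matrix of the decaying scalars `e^{-tλᵢ}`, `λᵢ > 0`.
-/

theorem Matrix.IsHermitian.exp_smul {n : Type*} [Fintype n] [DecidableEq n]
    {A : Matrix n n ℝ} (hA : A.IsHermitian) (t : ℝ) :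
    NormedSpace.exp (t • A) = Unitary.conjStarAlgAut ℝ _ hA.eigenvectorUnitary
      (diagonal fun i => Real.exp (t * hA.eigenvalues i)) := by
  set U := Unitary.toUnits hA.eigenvectorUnitary
  have hconj : ∀ D, Unitary.conjStarAlgAut ℝ _ hA.eigenvectorUnitary D =
      (U : Matrix n n ℝ) * D * ((U⁻¹ : (Matrix n n ℝ)ˣ) : Matrix n n ℝ) := fun _ => rfl
  conv_lhs => rw [hA.spectral_theorem, ← map_smul, ← diagonal_smul]
  rw [hconj, hconj, Matrix.exp_units_conj, exp_diagonal]
  congr 3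
  ext i
  simp [Real.exp_eq_exp_ℝ]

theorem Matrix.PosDef.tendsto_exp_neg_smul_atTop {n : Type*} [Fintype n] [DecidableEq n]
    {A : Matrix n n ℝ} (hA : A.PosDef) :
    Tendsto (fun t : ℝ => NormedSpace.exp (-(t • A))) atTop (𝓝 0) := by
  have hdiag : Tendsto (fun t : ℝ => diagonal fun i => Real.exp (-(t * hA.isHermitian.eigenvalues i)))
      atTop (𝓝 (diagonal 0)) :=
    (continuous_id.matrix_diagonal.tendsto _).comp <| tendsto_pi_nhds.2 fun i =>
      Real.tendsto_exp_neg_atTop_nhds_zero.comp (tendsto_id.atTop_mul_const (hA.eigenvalues_pos i))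
  have hconj : Continuous (Unitary.conjStarAlgAut ℝ _ hA.isHermitian.eigenvectorUnitary) :=
    (continuous_const.matrix_mul continuous_id).matrix_mul continuous_const
  simp_rw [← neg_smul, hA.isHermitian.exp_smul, neg_mul]
  exact (hconj.tendsto' _ 0 (by simp)).comp hdiag

theorem scrubbing_tendsto_newton_update_general {d : ℕ}
    (A B : Matrix (Fin d) (Fin d) ℝ) (hB : B.PosDef)
    (w₀ wA wB : Fin d → ℝ)
    (wApath dA dB scrub : ℝ → (Fin d → ℝ))
    (hwA : ∀ t, wApath t = wA + (NormedSpace.exp (-(t • A))) *ᵥ (w₀ - wA))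
    (hdA : ∀ t, dA t = wApath t - wA)
    (hdB : ∀ t, dB t = wApath t - wB)
    (hscrub : ∀ t, scrub t = wApath t + (NormedSpace.exp (-(t • B)) * NormedSpace.exp (t • A)) *ᵥ dA t
        + (NormedSpace.exp (-(t • B))) *ᵥ (dB t - dA t) - dB t) :
    Tendsto (fun t : ℝ => ‖scrub t - (wApath t - (B⁻¹ * B) *ᵥ (wApath t - wB))‖)
      atTop (𝓝 0) := by
  have hBinv : B⁻¹ * B = 1 := nonsing_inv_mul B (isUnit_iff_ne_zero.2 hB.det_pos.ne')
  have hexpA : ∀ t : ℝ, NormedSpace.exp (t • A) * NormedSpace.exp (-(t • A)) = 1 := fun t => by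
    rw [← Matrix.exp_add_of_commute _ _ (Commute.refl (t • A)).neg_right, add_neg_cancel, exp_zero]
  have hresidual : ∀ t : ℝ, scrub t - (wApath t - (B⁻¹ * B) *ᵥ (wApath t - wB)) =
      NormedSpace.exp (-(t • B)) *ᵥ (w₀ - wB) := fun t => by
    have hdA' : dA t = NormedSpace.exp (-(t • A)) *ᵥ (w₀ - wA) := by rw [hdA, hwA]; abel
    have hdBA : dB t - dA t = wA - wB := by rw [hdA, hdB]; abel
    rw [hscrub, hdBA, hdB, hdA', mulVec_mulVec, Matrix.mul_assoc, hexpA, Matrix.mul_one,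
      hBinv, one_mulVec, ← sub_add_sub_cancel w₀ wA wB, mulVec_add]
    abel
  simp_rw [hresidual, ← tendsto_zero_iff_norm_tendsto_zero]
  exact ((continuous_id.matrix_mulVec continuous_const).tendsto' 0 0 (zero_mulVec _)).comp
    hB.tendsto_exp_neg_smul_atTop

/-- **Paper's Proposition 3, limiting case**: as `t → ∞`, the optimal quadratic scrubbing
`h_t(w_A(t)) = w_A(t) + e^{−tB}e^{tA} d_A(t) + e^{−tB}(d_B(t) − d_A(t)) − d_B(t)` converges
to the Newton update `S_∞(w) = w − B⁻¹ ∇L_{𝒟_r}(w)`, where `∇L_{𝒟_r}(w) = B(w − w*_B)`: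
`‖h_t(w_A(t)) − (w_A(t) − B⁻¹ B (w_A(t) − w*_B))‖ → 0`. -/
theorem scrubbing_tendsto_newton_update {d : ℕ}
    (A B : Matrix (Fin d) (Fin d) ℝ) (hA : A.PosDef) (hB : B.PosDef)
    (w₀ wA wB : Fin d → ℝ)
    (wApath dA dB scrub : ℝ → (Fin d → ℝ))
    (hwA : ∀ t, wApath t = wA + (NormedSpace.exp (-(t • A))) *ᵥ (w₀ - wA))
    (hdA : ∀ t, dA t = wApath t - wA)
    (hdB : ∀ t, dB t = wApath t - wB)
    (hscrub : ∀ t, scrub t = wApath t + (NormedSpace.exp (-(t • B)) * NormedSpace.exp (t • A)) *ᵥ dA t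
        + (NormedSpace.exp (-(t • B))) *ᵥ (dB t - dA t) - dB t) :
    Tendsto (fun t : ℝ => ‖scrub t - (wApath t - (B⁻¹ * B) *ᵥ (wApath t - wB))‖)
      atTop (𝓝 0) :=
  scrubbing_tendsto_newton_update_general A B hB w₀ wA wB wApath dA dB scrub hwA hdA hdB hscrub
end

section
/- Let B be a symmetric positive definite d×d real matrix and c > 0. For every symmetric positive definite d×d matrix Σ, tr(BΣ) + c · tr(Σ⁻¹) ≥ 2√c · tr(B^{1/2}), and equality holds for Σ₀ = √c · B^{−1/2}, i.e., Σ₀ minimizes Σ ↦ tr(BΣ) + c·tr(Σ⁻¹) over symmetric positive definite matrices. (Paper's Proposition 4, isotropic case: with c = λσ_h², the optimal noise covariance for the scrubbing procedure S(w) = h(w) + n, n ∼ N(0,Σ), minimizing the Forgetting Lagrangian is Σ = √(λσ_h²) B^{−1/2}.) -/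
open Matrix
section
open scoped ComplexOrder
noncomputable def Matrix.PosSemidef.sqrt {n : Type*} [Fintype n] [DecidableEq n] {𝕜 : Type*}
    [RCLike 𝕜] {A : Matrix n n 𝕜} (hA : A.PosSemidef) : Matrix n n 𝕜 :=
  hA.1.eigenvectorUnitary.1 * diagonal ((↑) ∘ (Real.sqrt ∘ hA.1.eigenvalues)) *
  (star hA.1.eigenvectorUnitary : Matrix n n 𝕜)
end

/-!
Write `B = A²` with `A = B^{1/2}` and `S = R²` with `R = S^{1/2}`. For every real `t`, the matrix
`X = R A - t R⁻¹` satisfies `tr(Xᵀ X) = tr(B S) + t² tr(S⁻¹) - 2 t tr A`, and `tr(Xᵀ X) ≥ 0`.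
With `t = √c` this is the inequality, and `X = 0` at `S = t A⁻¹`, which gives equality.
-/

namespace Matrix

variable {n : Type*} [Fintype n] [DecidableEq n]

section RCLike

variable {𝕜 : Type*} [RCLike 𝕜] {M : Matrix n n 𝕜}

open scoped ComplexOrder

lemma PosSemidef.sqrt_posSemidef (hM : M.PosSemidef) : hM.sqrt.PosSemidef := by
  unfold PosSemidef.sqrt
  rw [star_eq_conjTranspose]
  refine PosSemidef.mul_mul_conjTranspose_same ?_ _
  rw [posSemidef_diagonal_iff]
  intro i
  simp [Real.sqrt_nonneg]

lemma PosSemidef.sqrt_mul_self (hM : M.PosSemidef) : hM.sqrt * hM.sqrt = M := by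
  unfold PosSemidef.sqrt
  have hU : (star hM.1.eigenvectorUnitary : Matrix n n 𝕜) * hM.1.eigenvectorUnitary.1 = 1 :=
    Unitary.coe_star_mul_self _
  conv_rhs => rw [hM.1.spectral_theorem, Unitary.conjStarAlgAut_apply]
  simp only [Matrix.mul_assoc]
  rw [← Matrix.mul_assoc _ _ (diagonal _ * _), hU, Matrix.one_mul, ← Matrix.mul_assoc
    (diagonal _) (diagonal _), diagonal_mul_diagonal]
  congr 3
  funext i
  simp [← RCLike.ofReal_mul, Real.mul_self_sqrt (hM.eigenvalues_nonneg i)]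

lemma PosDef.sqrt_posDef (hM : M.PosDef) : hM.posSemidef.sqrt.PosDef := by
  refine hM.posSemidef.sqrt_posSemidef.posDef_iff_isUnit.mpr ?_
  have h : IsUnit (hM.posSemidef.sqrt * hM.posSemidef.sqrt).det := by
    rw [hM.posSemidef.sqrt_mul_self, ← isUnit_iff_isUnit_det]
    exact hM.isUnit
  rw [det_mul, IsUnit.mul_iff] at h
  exact (isUnit_iff_isUnit_det _).mpr h.1

end RCLike

lemma trace_conjTranspose_mul_self_mul_sub_smul_inv {A R : Matrix n n ℝ} (hA : A.IsHermitian)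
    (hR : R.IsHermitian) (hRu : IsUnit R.det) (t : ℝ) :
    ((R * A - t • R⁻¹)ᴴ * (R * A - t • R⁻¹)).trace
      = (A * A * (R * R)).trace + t ^ 2 * (R * R)⁻¹.trace - 2 * t * A.trace := by
  have hXH : (R * A - t • R⁻¹)ᴴ = A * R - t • R⁻¹ := by
    rw [conjTranspose_sub, conjTranspose_mul, conjTranspose_smul, hA.eq, hR.eq, hR.inv.eq,
      star_trivial]
  have hexpand : (A * R - t • R⁻¹) * (R * A - t • R⁻¹)
      = A * (R * R) * A - (2 * t) • A + t ^ 2 • (R * R)⁻¹ := by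
    simp only [Matrix.sub_mul, Matrix.mul_sub, Matrix.mul_smul, Matrix.smul_mul,
      Matrix.mul_assoc, mul_nonsing_inv _ hRu, nonsing_inv_mul_cancel_left (A := R) _ hRu,
      mul_inv_rev]
    rw [Matrix.mul_one]
    module
  rw [hXH, hexpand, trace_add, trace_sub, trace_smul, trace_smul, trace_mul_comm (A * _),
    ← Matrix.mul_assoc, smul_eq_mul, smul_eq_mul]
  ring

theorem two_mul_trace_le_trace_mul_add_sq_mul_trace_inv {A S : Matrix n n ℝ}
    (hA : A.IsHermitian) (hS : S.PosDef) (t : ℝ) :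
    2 * t * A.trace ≤ (A * A * S).trace + t ^ 2 * S⁻¹.trace := by
  set R := hS.posSemidef.sqrt
  have hR : R.PosDef := hS.sqrt_posDef
  have hRR : R * R = S := hS.posSemidef.sqrt_mul_self
  have hnonneg := (posSemidef_conjTranspose_mul_self (R * A - t • R⁻¹)).trace_nonneg
  rw [trace_conjTranspose_mul_self_mul_sub_smul_inv hA hR.isHermitian
    ((isUnit_iff_isUnit_det R).mp hR.isUnit) t, hRR] at hnonneg
  linarith

theorem trace_mul_smul_inv_add_sq_mul_trace_inv {K : Type*} [Field K] {A : Matrix n n K}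
    (hA : IsUnit A.det) {t : K} (ht : t ≠ 0) :
    (A * A * (t • A⁻¹)).trace + t ^ 2 * (t • A⁻¹)⁻¹.trace = 2 * t * A.trace := by
  have hinv : (t • A⁻¹)⁻¹ = t⁻¹ • A := by
    refine inv_eq_right_inv ?_
    rw [Matrix.smul_mul, Matrix.mul_smul, smul_smul, nonsing_inv_mul _ hA, mul_inv_cancel₀ ht,
      one_smul]
  rw [hinv, Matrix.mul_smul, Matrix.mul_assoc, mul_nonsing_inv _ hA, Matrix.mul_one,
    trace_smul, trace_smul, smul_eq_mul, smul_eq_mul]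
  field_simp
  ring

end Matrix

/-- **Paper's Proposition 4, isotropic case**: for a symmetric positive definite matrix `B`
and `c > 0`, every symmetric positive definite `Σ` satisfies
`tr(BΣ) + c·tr(Σ⁻¹) ≥ 2√c·tr(B^{1/2})`, with equality at `Σ₀ = √c·B^{−1/2}`; i.e. `Σ₀`
minimizes `Σ ↦ tr(BΣ) + c·tr(Σ⁻¹)` over symmetric positive definite matrices. -/
theorem optimal_isotropic_noise_covariance {d : ℕ}
    (B : Matrix (Fin d) (Fin d) ℝ) (hB : B.PosDef) (c : ℝ) (hc : 0 < c) :
    (∀ S : Matrix (Fin d) (Fin d) ℝ, S.PosDef →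
      2 * Real.sqrt c * (hB.posSemidef.sqrt).trace ≤ (B * S).trace + c * S⁻¹.trace)
    ∧ (B * (Real.sqrt c • (hB.posSemidef.sqrt)⁻¹)).trace
        + c * (Real.sqrt c • (hB.posSemidef.sqrt)⁻¹)⁻¹.trace
      = 2 * Real.sqrt c * (hB.posSemidef.sqrt).trace := by
  set A := hB.posSemidef.sqrt
  have hA : A.PosDef := hB.sqrt_posDef
  have hAA : A * A = B := hB.posSemidef.sqrt_mul_self
  have hsq : Real.sqrt c ^ 2 = c := Real.sq_sqrt hc.le
  refine ⟨fun S hS => ?_, ?_⟩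
  · simpa only [hAA, hsq] using
      two_mul_trace_le_trace_mul_add_sq_mul_trace_inv hA.isHermitian hS (Real.sqrt c)
  · simpa only [hAA, hsq] using trace_mul_smul_inv_add_sq_mul_trace_inv
      ((isUnit_iff_isUnit_det A).mp hA.isUnit) (Real.sqrt_pos.mpr hc).ne'
end
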